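/- arXiv:2507.18281 — 4 statements merged into one kernel-verified Lean document; each statement's English description precedes it below -/
import Mathlib

section
/- Let G be a bipartite graph with parts S (species) and C (characters). If G admits a directed perfect phylogeny (equivalently, for every two characters c1, c2, there do not exist three species s1, s2, s3 with s1 adjacent to c1 but not c2, s2 adjacent to c2 but not c1, and s3 adjacent to both), then G contains no induced path on five vertices starting and ending at species vertices (a Σ-graph), and conversely. -/
/-! The species realising the gametes (1,0), (0,1), (1,1) of two characters are pairwise distinct,
because their gametes differ; placing the (1,1) species in the middle turns them into the induced
path s₁–c₁–s₃–c₂–s₂, and every Σ-graph arises this way. -/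

theorem exists_four_gametes_iff_exists_sigma {S C : Type*} (M : C → S → Prop) (c1 c2 : C) :
    (∃ s1 s2 s3 : S, (M c1 s1 ∧ ¬ M c2 s1) ∧ (M c2 s2 ∧ ¬ M c1 s2) ∧ (M c1 s3 ∧ M c2 s3)) ↔
    ∃ s1 s2 s3 : S, s1 ≠ s2 ∧ s2 ≠ s3 ∧ s1 ≠ s3 ∧
      M c1 s1 ∧ M c1 s2 ∧ M c2 s2 ∧ M c2 s3 ∧ ¬ M c2 s1 ∧ ¬ M c1 s3 := by
  constructor
  · rintro ⟨s10, s01, s11, ⟨h10₁, h10₂⟩, ⟨h01₂, h01₁⟩, h11₁, h11₂⟩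
    refine ⟨s10, s11, s01, ?_, ?_, ?_, h10₁, h11₁, h11₂, h01₂, h10₂, h01₁⟩
    · rintro rfl; exact h10₂ h11₂
    · rintro rfl; exact h01₁ h11₁
    · rintro rfl; exact h01₁ h10₁
  · rintro ⟨s1, s2, s3, -, -, -, h11, h21, h22, h32, h12, h31⟩
    exact ⟨s1, s3, s2, ⟨h11, h12⟩, ⟨h32, h31⟩, h21, h22⟩

/-- the four-gamete condition holds for every pair of characters
iff the bipartite species-character graph contains no induced Σ-graph. -/
theorem four_gamete_iff_no_sigma {S C : Type} (M : C → S → Prop) :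
    (∀ c1 c2 : C, c1 ≠ c2 →
      ¬ ∃ s1 s2 s3 : S, (M c1 s1 ∧ ¬ M c2 s1) ∧ (M c2 s2 ∧ ¬ M c1 s2) ∧ (M c1 s3 ∧ M c2 s3)) ↔
    ¬ ∃ (c1 c2 : C) (s1 s2 s3 : S), c1 ≠ c2 ∧ s1 ≠ s2 ∧ s2 ≠ s3 ∧ s1 ≠ s3 ∧
      M c1 s1 ∧ M c1 s2 ∧ M c2 s2 ∧ M c2 s3 ∧ ¬ M c2 s1 ∧ ¬ M c1 s3 := by
  simp only [exists_four_gametes_iff_exists_sigma]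
  exact ⟨fun h ⟨c1, c2, s1, s2, s3, hc, hσ⟩ => h c1 c2 hc ⟨s1, s2, s3, hσ⟩,
    fun h c1 c2 hc ⟨s1, s2, s3, hσ⟩ => h ⟨c1, c2, s1, s2, s3, hc, hσ⟩⟩
end

section
/- Let π = ⟨c1,...,cm⟩ be a reduction of a graph G_M, and let c be an active character in the partial reduction G_RB^k lying in the same connected component as c_{k+1}. If c_{k+1} has at least one neighbor in N^k(c), then N^k(c_{k+1}) contains either N^k(c) or its complement within the connected component (the set of species in the component of c not adjacent to c). -/
open Classical

/-- A red-black graph: a bipartite graph on characters `C` and species `S`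
with edges colored black or red. -/
structure RBGraph (S C : Type) where
  black : C → S → Prop
  red : C → S → Prop

namespace RBGraph

variable {S C : Type}

/-- `c` and `s` are adjacent (by an edge of either color). -/
def adj (G : RBGraph S C) (c : C) (s : S) : Prop := G.black c s ∨ G.red c s

/-- The underlying simple graph on `S ⊕ C`. -/
def toSimple (G : RBGraph S C) : SimpleGraph (S ⊕ C) where
  Adj x y := (∃ s c, x = Sum.inl s ∧ y = Sum.inr c ∧ G.adj c s) ∨
             (∃ s c, x = Sum.inr c ∧ y = Sum.inl s ∧ G.adj c s)
  symm := by
    constructor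
    rintro x y (⟨s, c, rfl, rfl, h⟩ | ⟨s, c, rfl, rfl, h⟩)
    · exact Or.inr ⟨s, c, rfl, rfl, h⟩
    · exact Or.inl ⟨s, c, rfl, rfl, h⟩
  loopless := by
    constructor
    rintro x (⟨s, c, rfl, h, -⟩ | ⟨s, c, rfl, h, -⟩) <;> simp at h

/-- `s` lies in the connected component of `c`. -/
def sameComp (G : RBGraph S C) (c : C) (s : S) : Prop :=
  G.toSimple.Reachable (Sum.inr c) (Sum.inl s)

/-- A character is active if it is incident to a red edge. -/
def active (G : RBGraph S C) (c : C) : Prop := ∃ s, G.red c s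

/-- A character is inactive if it is incident to no red edge. -/
def inactive (G : RBGraph S C) (c : C) : Prop := ¬ G.active c

/-- A character adjacent via red edges to all species of its connected component. -/
def redUniversal (G : RBGraph S C) (c : C) : Prop :=
  G.active c ∧ ∀ s, G.sameComp c s → G.red c s

/-- Remove all edges of red-universal characters (one round). -/
def pruneStep (G : RBGraph S C) : RBGraph S C :=
  ⟨fun c s => G.black c s ∧ ¬ G.redUniversal c,
   fun c s => G.red c s ∧ ¬ G.redUniversal c⟩

/-- Repeatedly remove all edges of red-universal characters. -/
def prune [Fintype C] (G : RBGraph S C) : RBGraph S C :=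
  pruneStep^[Fintype.card C] G

/-- Realization of a character `c`: add red edges from `c` to the species of its
connected component not adjacent to `c`, delete the black edges of `c`, then
repeatedly remove the edges of red-universal characters. -/
def realize [Fintype C] (G : RBGraph S C) (c : C) : RBGraph S C :=
  prune ⟨fun c' s => G.black c' s ∧ c' ≠ c,
         fun c' s => G.red c' s ∨ (c' = c ∧ ¬ G.black c s ∧ G.sameComp c s)⟩

/-- Realize a sequence of characters in order. -/
def realizeSeq [Fintype C] (G : RBGraph S C) (l : List C) : RBGraph S C :=
  l.foldl realize G

/-- The graph has no edges. -/
def edgeless (G : RBGraph S C) : Prop := ∀ c s, ¬ G.adj c s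

/-- A red Σ-graph: an induced all-red path `s1 - c1 - s2 - c2 - s3`. -/
def redSigma (G : RBGraph S C) : Prop :=
  ∃ (c1 c2 : C) (s1 s2 s3 : S), c1 ≠ c2 ∧ s1 ≠ s2 ∧ s2 ≠ s3 ∧ s1 ≠ s3 ∧
    G.red c1 s1 ∧ G.red c1 s2 ∧ G.red c2 s2 ∧ G.red c2 s3 ∧
    ¬ G.adj c1 s3 ∧ ¬ G.adj c2 s1

/-- A reduction of a red-black graph: an ordering of its (non-isolated) inactive
characters whose successive realizations yield an edgeless graph, never creating
a red Σ-graph. -/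
def isReductionFrom [Fintype C] (G : RBGraph S C) (l : List C) : Prop :=
  l.Nodup ∧ (∀ c, G.inactive c → (∃ s, G.black c s) → c ∈ l) ∧
  (∀ c ∈ l, G.inactive c) ∧
  edgeless (realizeSeq G l) ∧
  ∀ k ≤ l.length, ¬ redSigma (realizeSeq G (l.take k))

/-- A red-black graph is reducible if it admits a reduction. -/
def reducible [Fintype C] (G : RBGraph S C) : Prop := ∃ l, isReductionFrom G l

/-- A character is safe if its realization yields a reducible red-black graph. -/
def safe [Fintype C] (G : RBGraph S C) (c : C) : Prop := reducible (G.realize c)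

/-- The (all-black) red-black graph of a binary species-character matrix. -/
def ofMatrix (M : C → S → Prop) : RBGraph S C := ⟨M, fun _ _ => False⟩

/-- A reduction of the graph of a matrix: an ordering of all characters whose
successive realizations yield an edgeless graph, never creating a red Σ-graph. -/
def isReduction [Fintype C] (M : C → S → Prop) (l : List C) : Prop :=
  l.Nodup ∧ (∀ c, c ∈ l) ∧ edgeless (realizeSeq (ofMatrix M) l) ∧
  ∀ k ≤ l.length, ¬ redSigma (realizeSeq (ofMatrix M) (l.take k))

/-- The partial reduction after realizing the first `t` characters of `l`. -/
def partialRed [Fintype C] (M : C → S → Prop) (l : List C) (t : ℕ) : RBGraph S C :=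
  realizeSeq (ofMatrix M) (l.take t)

/-- The matrix is maximal: no character's species set is contained in that of
another character. -/
def MaximalM (M : C → S → Prop) : Prop :=
  ∀ c1 c2 : C, c1 ≠ c2 → ¬ (∀ s, M c1 s → M c2 s)

/-- A vertex is non-isolated if it has an incident edge. -/
def nonIsolated (G : RBGraph S C) : S ⊕ C → Prop
  | Sum.inl s => ∃ c, G.adj c s
  | Sum.inr c => ∃ s, G.adj c s

/-- The graph has a single connected component (ignoring isolated vertices). -/
def singleComponent (G : RBGraph S C) : Prop :=
  ∀ x y, G.nonIsolated x → G.nonIsolated y → G.toSimple.Reachable x y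

/-- Species incident only to black edges (and at least one of them). -/
def SB (G : RBGraph S C) : Set S := {s | (∃ c, G.black c s) ∧ ∀ c, ¬ G.red c s}

/-- Species incident to at least one red edge. -/
def SR (G : RBGraph S C) : Set S := {s | ∃ c, G.red c s}

/-- Inactive characters whose neighborhood is contained in `S_R`. -/
def CC (G : RBGraph S C) : Set C :=
  {c | G.inactive c ∧ (∃ s, G.black c s) ∧ ∀ s, G.black c s → s ∈ G.SR}

/-- Inactive characters with a neighbor and a non-neighbor in `S_R`. -/
def CI (G : RBGraph S C) : Set C :=
  {c | G.inactive c ∧ (∃ s ∈ G.SR, G.black c s) ∧ (∃ s ∈ G.SR, ¬ G.black c s)}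

/-- Inactive characters with a neighbor in `S_B` that are universal on `S_R`. -/
def CU (G : RBGraph S C) : Set C :=
  {c | G.inactive c ∧ (∃ s ∈ G.SB, G.black c s) ∧ ∀ s ∈ G.SR, G.black c s}

/-- The subgraph induced by a set of characters and a set of species. -/
def induced (G : RBGraph S C) (Cs : Set C) (Ss : Set S) : RBGraph S C :=
  ⟨fun c s => G.black c s ∧ c ∈ Cs ∧ s ∈ Ss,
   fun c s => G.red c s ∧ c ∈ Cs ∧ s ∈ Ss⟩

/-- `c2` is the center of an induced path on four species and three characters. -/
def isP7Center (M : C → S → Prop) (c2 : C) : Prop :=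
  ∃ (c1 c3 : C) (s1 s2 s3 s4 : S),
    c1 ≠ c2 ∧ c2 ≠ c3 ∧ c1 ≠ c3 ∧
    s1 ≠ s2 ∧ s1 ≠ s3 ∧ s1 ≠ s4 ∧ s2 ≠ s3 ∧ s2 ≠ s4 ∧ s3 ≠ s4 ∧
    M c1 s1 ∧ M c1 s2 ∧ M c2 s2 ∧ M c2 s3 ∧ M c3 s3 ∧ M c3 s4 ∧
    ¬ M c1 s3 ∧ ¬ M c1 s4 ∧ ¬ M c2 s1 ∧ ¬ M c2 s4 ∧ ¬ M c3 s1 ∧ ¬ M c3 s2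

/-- Minimum-degree species none of whose characters is the center of an induced `P7`. -/
def S7m (M : C → S → Prop) : Set S :=
  {s | (∀ s', {c | M c s}.ncard ≤ {c | M c s'}.ncard) ∧
       ∀ c, M c s → ¬ isP7Center M c}

/-- The species of `S_B` not adjacent to `cm`. -/
def SBm (G : RBGraph S C) (cm : C) : Set S := {s | s ∈ G.SB ∧ ¬ G.black cm s}

/-- `C_I` together with the characters of `C_U` with a neighbor in `S_B^m`. -/
def CBm (G : RBGraph S C) (cm : C) : Set C :=
  G.CI ∪ {c ∈ G.CU | ∃ s ∈ G.SBm cm, G.black c s}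

end RBGraph

/-!
Suppose `c_{k+1}` meets `N(c)` in `s₂` but misses some `s₁ ∈ N(c)` and some species `s₃` of the
component outside `N(c)`. Since `c_{k+1}` is still inactive its edge to `s₂` is black, and since
`c` is active it has no black edges. Realizing `c_{k+1}` therefore deletes its edge to `s₂` and
adds red edges to `s₁` and `s₃`, leaving the induced red path `s₃ - c_{k+1} - s₁ - c - s₂`: a red
Σ-graph. Pruning cannot destroy it, as neither of its characters is red-universal. This
contradicts `π` being a reduction.
-/

namespace RBGraph

variable {S C : Type}

theorem adj_toSimple {G : RBGraph S C} {c : C} {s : S} (h : G.adj c s) :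
    G.toSimple.Adj (Sum.inr c) (Sum.inl s) :=
  Or.inr ⟨s, c, rfl, rfl, h⟩

section Prune

variable {G : RBGraph S C} {c : C} {s : S}

theorem red_of_prune [Fintype C] (h : (prune G).red c s) : G.red c s :=
  Function.Iterate.rec (fun H : RBGraph S C => H.red c s → G.red c s) id
    (f := pruneStep) (fun _ ih h => ih h.1) (Fintype.card C) h

theorem black_of_prune [Fintype C] (h : (prune G).black c s) : G.black c s :=
  Function.Iterate.rec (fun H : RBGraph S C => H.black c s → G.black c s) id
    (f := pruneStep) (fun _ ih h => ih h.1) (Fintype.card C) h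

/-- Each character of a red Σ-graph misses a species of its component, so it is not
red-universal and keeps its edges. -/
theorem redSigma.pruneStep (h : G.redSigma) : G.pruneStep.redSigma := by
  obtain ⟨c1, c2, s1, s2, s3, hc, h12, h23, h13, r11, r12, r22, r23, n13, n21⟩ := h
  have reach (c c' : C) (s s' : S) (hcs : G.red c s) (hc's : G.red c' s) (hc's' : G.red c' s') :
      G.sameComp c s' :=
    ((adj_toSimple (Or.inr hcs)).reachable.trans (adj_toSimple (Or.inr hc's)).reachable.symm).trans
      (adj_toSimple (Or.inr hc's')).reachable
  have hu1 : ¬ G.redUniversal c1 := fun hu => n13 (Or.inr (hu.2 s3 (reach c1 c2 s2 s3 r12 r22 r23)))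
  have hu2 : ¬ G.redUniversal c2 := fun hu => n21 (Or.inr (hu.2 s1 (reach c2 c1 s2 s1 r22 r12 r11)))
  exact ⟨c1, c2, s1, s2, s3, hc, h12, h23, h13, ⟨r11, hu1⟩, ⟨r12, hu1⟩, ⟨r22, hu2⟩, ⟨r23, hu2⟩,
    fun h => n13 (h.imp And.left And.left), fun h => n21 (h.imp And.left And.left)⟩

theorem redSigma.prune [Fintype C] (h : G.redSigma) : (RBGraph.prune G).redSigma :=
  Function.Iterate.rec redSigma h (fun _ => redSigma.pruneStep) (Fintype.card C)

end Prune

def preRealize (G : RBGraph S C) (c : C) : RBGraph S C :=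
  ⟨fun c' s => G.black c' s ∧ c' ≠ c,
   fun c' s => G.red c' s ∨ (c' = c ∧ ¬ G.black c s ∧ G.sameComp c s)⟩

theorem realize_eq_prune_preRealize [Fintype C] (G : RBGraph S C) (c : C) :
    G.realize c = prune (G.preRealize c) := rfl

theorem red_of_realize [Fintype C] {G : RBGraph S C} {d c : C} {s : S}
    (h : (G.realize d).red c s) : G.red c s ∨ c = d :=
  (red_of_prune h).imp_right And.left

theorem red_of_realizeSeq [Fintype C] {G : RBGraph S C} {l : List C} {c : C} {s : S}
    (h : (G.realizeSeq l).red c s) : G.red c s ∨ c ∈ l := by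
  induction l generalizing G with
  | nil => exact Or.inl h
  | cons a t ih =>
    rcases ih h with h' | h'
    · exact (red_of_realize h').imp_right (by rintro rfl; exact List.mem_cons_self)
    · exact Or.inr (List.mem_cons_of_mem a h')

def activeBlackFree (G : RBGraph S C) : Prop := ∀ c, G.active c → ∀ s, ¬ G.black c s

theorem activeBlackFree.realize [Fintype C] {G : RBGraph S C} (hG : G.activeBlackFree) (d : C) :
    (G.realize d).activeBlackFree := by
  rintro c ⟨s, hr⟩ s' hb
  obtain ⟨hb', hne⟩ := black_of_prune hb
  rcases red_of_realize hr with h | h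
  · exact hG c ⟨s, h⟩ s' hb'
  · exact hne h

theorem activeBlackFree.realizeSeq [Fintype C] {G : RBGraph S C} (hG : G.activeBlackFree)
    (l : List C) : (G.realizeSeq l).activeBlackFree := by
  induction l generalizing G with
  | nil => exact hG
  | cons a t ih => exact ih (hG.realize a)

theorem activeBlackFree_ofMatrix (M : C → S → Prop) : (ofMatrix M).activeBlackFree :=
  fun _ ⟨_, h⟩ => h.elim

theorem top_or_bottom_of_not_redSigma_realize [Fintype C] {G : RBGraph S C}
    (hG : G.activeBlackFree) {c d : C} (hc : G.active c) (hd : G.inactive d)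
    (hcd : G.toSimple.Reachable (Sum.inr c) (Sum.inr d)) (hnb : ∃ s, G.red c s ∧ G.adj d s)
    (hsigma : ¬ (G.realize d).redSigma) :
    (∀ s, G.red c s → G.adj d s) ∨ (∀ s, G.sameComp c s → ¬ G.red c s → G.adj d s) := by
  by_contra! h
  obtain ⟨⟨s1, hcs1, hds1⟩, s3, hcomp3, hcs3, hds3⟩ := h
  obtain ⟨s2, hcs2, hds2⟩ := hnb
  have hcd_ne : c ≠ d := fun h => hd (h ▸ hc)
  have hds2_black : G.black d s2 := hds2.resolve_right fun h => hd ⟨s2, h⟩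
  apply hsigma
  rw [realize_eq_prune_preRealize]
  refine redSigma.prune ⟨d, c, s3, s1, s2, hcd_ne.symm, fun h => hcs3 (h ▸ hcs1),
    fun h => hds1 (h ▸ hds2), fun h => hds3 (h ▸ hds2),
    Or.inr ⟨rfl, fun h => hds3 (Or.inl h), hcd.symm.trans hcomp3⟩,
    Or.inr ⟨rfl, fun h => hds1 (Or.inl h), hcd.symm.trans (adj_toSimple (Or.inr hcs1)).reachable⟩,
    Or.inl hcs1, Or.inl hcs2, ?_, ?_⟩
  · rintro (⟨-, h⟩ | h | ⟨-, h, -⟩)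
    exacts [h rfl, hd ⟨s2, h⟩, h hds2_black]
  · rintro (⟨h, -⟩ | h | ⟨h, -⟩)
    exacts [hG c hc s3 h, hcs3 h, hcd_ne h]

section PartialReduction

variable [Fintype C] {M : C → S → Prop} {l : List C} {k : ℕ}

theorem partialRed_succ (hk : k < l.length) :
    partialRed M l (k + 1) = (partialRed M l k).realize l[k] := by
  rw [partialRed, partialRed, ← List.take_concat_get' l k hk, realizeSeq, List.foldl_append]
  rfl

theorem inactive_partialRed_getElem (hl : l.Nodup) (hk : k < l.length) :
    (partialRed M l k).inactive l[k] := by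
  rintro ⟨s, hs⟩
  rcases red_of_realizeSeq hs with h | h
  · exact h
  · refine List.disjoint_take_drop hl le_rfl h ?_
    rw [← List.cons_getElem_drop_succ]
    exact List.mem_cons_self

end PartialReduction

end RBGraph

/-- Proposition: universalTopBottom. -/
theorem universal_top_bottom {S C : Type} [Fintype C] (M : C → S → Prop)
    (l : List C) (hl : RBGraph.isReduction M l) (k : ℕ) (hk : k < l.length)
    (Gk : RBGraph S C) (hGk : Gk = RBGraph.partialRed M l k)
    (c : C) (hc : Gk.active c)
    (hcomp : Gk.toSimple.Reachable (Sum.inr c) (Sum.inr (l.get ⟨k, hk⟩)))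
    (hnb : ∃ s, Gk.red c s ∧ Gk.adj (l.get ⟨k, hk⟩) s) :
    (∀ s, Gk.red c s → Gk.adj (l.get ⟨k, hk⟩) s) ∨
    (∀ s, Gk.sameComp c s → ¬ Gk.red c s → Gk.adj (l.get ⟨k, hk⟩) s) := by
  subst hGk
  refine RBGraph.top_or_bottom_of_not_redSigma_realize (G := RBGraph.partialRed M l k)
    ((RBGraph.activeBlackFree_ofMatrix M).realizeSeq _) hc
    (RBGraph.inactive_partialRed_getElem hl.1 hk) hcomp hnb ?_
  exact RBGraph.partialRed_succ hk ▸ hl.2.2.2 (k + 1) hk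
end

section
/- In any partial reduction G_RB^k of a maximal connected graph, every inactive character has at least one neighbor in the red neighborhood of each active character. -/
open Classical

/-!
Realize the characters one at a time and track the set `R` of realized ones. Unrealized
characters keep their black edges from `M` and have no red ones, realized characters have no
black edges, and a red edge never joins a character to one of its own species. On top of this
two facts are carried along: every active character has a red edge to some species of each
unrealized character, and a realized character that has lost all its edges shares no species
with an unrealized one. The first fact puts all unrealized characters into one component
(through an active character; if there is none, the second fact and the connectivity of `M`
do it).

When `c` is realized, maximality gives every unrealized `e` a species outside `c`; it lies in
the component of `c`, so it becomes a red neighbour of `c`, and the first fact survives.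
A character removed by pruning while red-adjacent to a species of `e` was red-universal, hence
red-adjacent to every species of `e`, none of which can then be its own: this is the second
fact. The theorem is the first fact, the inactive character being unrealized because it still
has black edges.
-/

theorem SimpleGraph.Reachable.of_adj_closed {V : Type*} {G : SimpleGraph V} {P : V → Prop}
    (hP : ∀ x y, P x → G.Adj x y → P y) {x y : V} (h : G.Reachable x y) (hx : P x) : P y := by
  obtain ⟨w⟩ := h
  induction w with
  | nil => exact hx
  | cons hadj _ ih => exact ih (hP _ _ hx hadj)

namespace RBGraph

variable {S C : Type}

theorem reachable_of_adj {G : RBGraph S C} {c : C} {s : S} (h : G.adj c s) :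
    G.toSimple.Reachable (Sum.inr c) (Sum.inl s) :=
  SimpleGraph.Adj.reachable (Or.inr ⟨s, c, rfl, rfl, h⟩)

@[simp]
theorem ofMatrix_adj {M : C → S → Prop} {c : C} {s : S} : (ofMatrix M).adj c s ↔ M c s :=
  iff_of_eq (or_false _)

section Pruning

variable {c : C} {s : S}

theorem red_of_red_pruneStep_iterate (n : ℕ) :
    ∀ {H : RBGraph S C}, (pruneStep^[n] H).red c s → H.red c s := by
  induction n with
  | zero => exact id
  | succ n ih => exact fun h => (ih h).1

theorem black_of_black_pruneStep_iterate (n : ℕ) :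
    ∀ {H : RBGraph S C}, (pruneStep^[n] H).black c s → H.black c s := by
  induction n with
  | zero => exact id
  | succ n ih => exact fun h => (ih h).1

theorem inactive_pruneStep_iterate {H : RBGraph S C} (n : ℕ) (hc : H.inactive c) :
    (pruneStep^[n] H).inactive c :=
  fun ⟨t, ht⟩ => hc ⟨t, red_of_red_pruneStep_iterate n ht⟩

theorem black_pruneStep_iterate_iff (n : ℕ) :
    ∀ {H : RBGraph S C}, H.inactive c → ((pruneStep^[n] H).black c s ↔ H.black c s) := by
  induction n with
  | zero => exact fun _ => Iff.rfl
  | succ n ih =>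
    intro H hc
    exact (ih (inactive_pruneStep_iterate 1 hc)).trans
      ⟨And.left, fun hb => ⟨hb, fun hu => hc hu.1⟩⟩

theorem red_pruneStep_iterate_iff (n : ℕ) :
    ∀ {H : RBGraph S C}, (pruneStep^[n] H).active c →
      ((pruneStep^[n] H).red c s ↔ H.red c s) := by
  induction n with
  | zero => exact fun _ => Iff.rfl
  | succ n ih =>
    intro H hact
    have hu : ¬ H.redUniversal c := by
      obtain ⟨t, ht⟩ := hact
      exact (red_of_red_pruneStep_iterate n ht).2
    exact (ih hact).trans ⟨And.left, fun hr => ⟨hr, hu⟩⟩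

/-- A character `h` with a red edge to a species `t` of an inactive character `e` can only be
pruned as a red-universal character, and then `t` connects it to every species of `e`. -/
theorem red_of_inactive_pruneStep_iterate {h e : C} {t : S} (n : ℕ) :
    ∀ {H : RBGraph S C}, H.red h t → H.inactive e → H.black e t → H.black e s →
      (pruneStep^[n] H).inactive h → H.red h s := by
  induction n with
  | zero =>
    intro H ht _ _ _ hdead
    exact (hdead ⟨t, ht⟩).elim
  | succ n ih =>
    intro H ht he het hes hdead
    by_cases hu : H.redUniversal h
    · exact hu.2 s <| (reachable_of_adj (Or.inr ht)).trans <|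
        (reachable_of_adj (Or.inl het)).symm.trans (reachable_of_adj (Or.inl hes))
    · have hnu : ¬ H.redUniversal e := fun hu => he hu.1
      exact (ih (H := pruneStep H) ⟨ht, hu⟩ (inactive_pruneStep_iterate 1 he) ⟨het, hnu⟩
        ⟨hes, hnu⟩ hdead).1

end Pruning

def realizeUnpruned (G : RBGraph S C) (c : C) : RBGraph S C :=
  ⟨fun c' s => G.black c' s ∧ c' ≠ c,
   fun c' s => G.red c' s ∨ (c' = c ∧ ¬ G.black c s ∧ G.sameComp c s)⟩

theorem realize_eq_prune [Fintype C] (G : RBGraph S C) (c : C) :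
    G.realize c = prune (G.realizeUnpruned c) :=
  rfl

/-- `G` is obtained from the graph of `M` by realizing exactly the characters of `R`, as far as
the edges of single characters are concerned. -/
structure IsPartialRealization (M : C → S → Prop) (R : Set C) (G : RBGraph S C) : Prop where
  black_iff : ∀ c ∉ R, ∀ s, G.black c s ↔ M c s
  inactive : ∀ c ∉ R, G.inactive c
  not_black : ∀ c ∈ R, ∀ s, ¬ G.black c s
  not_mem_of_red : ∀ {c s}, G.red c s → ¬ M c s

structure ReductionInvariant (M : C → S → Prop) (R : Set C) (G : RBGraph S C) : Prop
    extends IsPartialRealization M R G where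
  exists_red : ∀ h, G.active h → ∀ e ∉ R, ∃ s, M e s ∧ G.red h s
  disjoint : ∀ h ∈ R, G.inactive h → ∀ e ∉ R, ∀ s, M e s → ¬ M h s

variable {M : C → S → Prop} {R : Set C} {G : RBGraph S C} {c : C}

namespace IsPartialRealization

theorem prune [Fintype C] (hG : IsPartialRealization M R G) :
    IsPartialRealization M R (prune G) where
  black_iff c hc s :=
    (black_pruneStep_iterate_iff _ (hG.inactive c hc)).trans (hG.black_iff c hc s)
  inactive c hc := inactive_pruneStep_iterate _ (hG.inactive c hc)
  not_black c hc s hb := hG.not_black c hc s (black_of_black_pruneStep_iterate _ hb)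
  not_mem_of_red hr := hG.not_mem_of_red (red_of_red_pruneStep_iterate _ hr)

theorem realizeUnpruned (hG : IsPartialRealization M R G) (hc : c ∉ R) :
    IsPartialRealization M (insert c R) (G.realizeUnpruned c) where
  black_iff d hd s := by
    obtain ⟨hdc, hdR⟩ : d ≠ c ∧ d ∉ R := by simpa using hd
    exact ⟨fun hb => (hG.black_iff d hdR s).mp hb.1,
      fun hM => ⟨(hG.black_iff d hdR s).mpr hM, hdc⟩⟩
  inactive d hd := by
    obtain ⟨hdc, hdR⟩ : d ≠ c ∧ d ∉ R := by simpa using hd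
    rintro ⟨s, hr | ⟨rfl, -⟩⟩
    · exact hG.inactive d hdR ⟨s, hr⟩
    · exact hdc rfl
  not_black d hd s hb := by
    rcases Set.mem_insert_iff.mp hd with rfl | hdR
    · exact hb.2 rfl
    · exact hG.not_black d hdR s hb.1
  not_mem_of_red := by
    rintro d s (hr | ⟨rfl, hnb, -⟩)
    · exact hG.not_mem_of_red hr
    · exact fun hM => hnb ((hG.black_iff d hc s).mpr hM)

end IsPartialRealization

namespace ReductionInvariant

theorem reachable (hconn : (ofMatrix M).toSimple.Connected) (hI : ReductionInvariant M R G)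
    {e f : C} (he : e ∉ R) (hf : f ∉ R) : G.toSimple.Reachable (Sum.inr e) (Sum.inr f) := by
  by_cases hact : ∃ h, G.active h
  · obtain ⟨h, hh⟩ := hact
    obtain ⟨se, hse, hhe⟩ := hI.exists_red h hh e he
    obtain ⟨sf, hsf, hhf⟩ := hI.exists_red h hh f hf
    exact (reachable_of_adj (Or.inl ((hI.black_iff e he se).mpr hse))).trans <|
      (reachable_of_adj (Or.inr hhe)).symm.trans <| (reachable_of_adj (Or.inr hhf)).trans
        (reachable_of_adj (Or.inl ((hI.black_iff f hf sf).mpr hsf))).symm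
  · have hinact : ∀ h, G.inactive h := fun h hh => hact ⟨h, hh⟩
    -- Nothing is active, so the realized characters share no species with the unrealized ones,
    -- and the `M`-component of `e` consists of unrealized characters and their species.
    refine ((hconn.preconnected (Sum.inr e) (Sum.inr f)).of_adj_closed
      (P := fun y => Sum.elim (fun s => ∃ d ∉ R, M d s) (· ∉ R) y ∧
        G.toSimple.Reachable (Sum.inr e) y) ?_ ⟨he, .rfl⟩).2
    rintro _ _ ⟨hy, hreach⟩ (⟨s, d, rfl, rfl, hds⟩ | ⟨s, d, rfl, rfl, hds⟩) <;>
      rw [ofMatrix_adj] at hds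
    · obtain ⟨d', hd', hd's⟩ := hy
      have hd : d ∉ R := fun hd => hI.disjoint d hd (hinact d) d' hd' s hd's hds
      exact ⟨hd, hreach.trans (reachable_of_adj (Or.inl ((hI.black_iff d hd s).mpr hds))).symm⟩
    · exact ⟨⟨d, hy, hds⟩,
        hreach.trans (reachable_of_adj (Or.inl ((hI.black_iff d hy s).mpr hds)))⟩

theorem exists_red_realizeUnpruned (hmax : MaximalM M) (hconn : (ofMatrix M).toSimple.Connected)
    (hI : ReductionInvariant M R G) (hc : c ∉ R) {h e : C} (hh : h = c ∨ G.active h)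
    (he : e ∉ insert c R) : ∃ t, M e t ∧ (G.realizeUnpruned c).red h t := by
  obtain ⟨hec, heR⟩ : e ≠ c ∧ e ∉ R := by simpa using he
  rcases hh with rfl | hh
  · obtain ⟨t, het, hht⟩ : ∃ t, M e t ∧ ¬ M h t := by simpa using hmax e h hec
    refine ⟨t, het, Or.inr ⟨rfl, fun hb => hht ((hI.black_iff h hc t).mp hb), ?_⟩⟩
    exact (hI.reachable hconn hc heR).trans
      (reachable_of_adj (Or.inl ((hI.black_iff e heR t).mpr het)))
  · obtain ⟨t, het, hht⟩ := hI.exists_red h hh e heR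
    exact ⟨t, het, Or.inl hht⟩

theorem realize [Fintype C] (hmax : MaximalM M) (hconn : (ofMatrix M).toSimple.Connected)
    (hI : ReductionInvariant M R G) (hc : c ∉ R) :
    ReductionInvariant M (insert c R) (G.realize c) := by
  rw [realize_eq_prune]
  have hH := hI.toIsPartialRealization.realizeUnpruned hc
  refine ⟨hH.prune, ?_, ?_⟩
  · intro h hh e he
    have hred s := red_pruneStep_iterate_iff (s := s) (Fintype.card C) hh
    have hcase : h = c ∨ G.active h := by
      obtain ⟨t, ht⟩ := hh
      rcases (hred t).mp ht with ht | ⟨rfl, -⟩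
      · exact Or.inr ⟨t, ht⟩
      · exact Or.inl rfl
    obtain ⟨s, hes, hhs⟩ := hI.exists_red_realizeUnpruned hmax hconn hc hcase he
    exact ⟨s, hes, (hred s).mpr hhs⟩
  · intro h hh hdead e he s hes hhs
    by_cases hcase : h = c ∨ G.active h
    · obtain ⟨t, het, hht⟩ := hI.exists_red_realizeUnpruned hmax hconn hc hcase he
      exact hH.not_mem_of_red (red_of_inactive_pruneStep_iterate _ hht (hH.inactive e he)
        ((hH.black_iff e he t).mpr het) ((hH.black_iff e he s).mpr hes) hdead) hhs
    · rw [not_or] at hcase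
      exact hI.disjoint h ((Set.mem_insert_iff.mp hh).resolve_left hcase.1) hcase.2 e
        (fun heR => he (Set.mem_insert_of_mem c heR)) s hes hhs

end ReductionInvariant

theorem reductionInvariant_realizeSeq [Fintype C] (hmax : MaximalM M)
    (hconn : (ofMatrix M).toSimple.Connected) {u : List C} (hu : u.Nodup) :
    ReductionInvariant M {c | c ∈ u} (realizeSeq (ofMatrix M) u) := by
  induction u using List.reverseRecOn with
  | nil =>
    exact ⟨⟨fun _ _ _ => Iff.rfl, fun _ _ ⟨_, h⟩ => h, fun _ h => absurd h List.not_mem_nil,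
      fun h => h.elim⟩, fun _ ⟨_, h⟩ => h.elim, fun _ h => absurd h List.not_mem_nil⟩
  | append_singleton u c ih =>
    obtain ⟨hu, -, hcu⟩ := List.nodup_append.mp hu
    have hR : {x | x ∈ u ++ [c]} = insert c {x | x ∈ u} := by
      ext
      simp [or_comm]
    rw [realizeSeq, List.foldl_append, hR]
    exact (ih hu).realize hmax hconn fun hc => hcu c hc c (List.mem_singleton_self c) rfl

end RBGraph

theorem inactive_meets_red_neighborhood_general {S C : Type} [Fintype C] (M : C → S → Prop)
    (hmax : RBGraph.MaximalM M) (hconn : (RBGraph.ofMatrix M).toSimple.Connected)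
    (l : List C) (hl : RBGraph.isReduction M l) (k : ℕ)
    (Gk : RBGraph S C) (hGk : Gk = RBGraph.partialRed M l k) :
    ∀ c c' : C, Gk.inactive c → (∃ s, Gk.black c s) → Gk.active c' →
      ∃ s, Gk.black c s ∧ Gk.red c' s := by
  rintro c c' - ⟨s₀, hs₀⟩ hc'
  subst hGk
  have hI := RBGraph.reductionInvariant_realizeSeq hmax hconn ((List.take_sublist k l).nodup hl.1)
  have hc : c ∉ {x | x ∈ l.take k} := fun hc => hI.not_black c hc s₀ hs₀
  obtain ⟨s, hcs, hc's⟩ := hI.exists_red c' hc' c hc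
  exact ⟨s, (hI.black_iff c hc s).mpr hcs, hc's⟩

/-- every inactive character has a neighbor in the red neighborhood
of each active character. -/
theorem inactive_meets_red_neighborhood {S C : Type} [Fintype C] (M : C → S → Prop)
    (hmax : RBGraph.MaximalM M) (hconn : (RBGraph.ofMatrix M).toSimple.Connected)
    (l : List C) (hl : RBGraph.isReduction M l) (k : ℕ) (hk : k ≤ l.length)
    (Gk : RBGraph S C) (hGk : Gk = RBGraph.partialRed M l k) :
    ∀ c c' : C, Gk.inactive c → (∃ s, Gk.black c s) → Gk.active c' →
      ∃ s, Gk.black c s ∧ Gk.red c' s :=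
  inactive_meets_red_neighborhood_general M hmax hconn l hl k Gk hGk
end

section
/- In any partial reduction G_RB^k of a maximal connected graph, every character in C_U has a non-neighbor among the neighbors of each character in C_I. -/
open Classical

/-!
Realizing a character deletes all of its black edges, and pruning deletes all edges of a
red-universal character, so at every stage of a reduction a character has either no black
edge or exactly its neighbourhood in the input matrix. A character of `C_I` misses a species
of `S_R` that every character of `C_U` sees, so the two are distinct, and maximality of the
matrix yields a species adjacent to the first but not to the second.
-/

namespace RBGraph

variable {S C : Type}

def BlackRowsOf (M : C → S → Prop) (G : RBGraph S C) : Prop :=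
  ∀ c, (∀ s, G.black c s ↔ M c s) ∨ ∀ s, ¬ G.black c s

namespace BlackRowsOf

variable {M : C → S → Prop} {G : RBGraph S C}

theorem black_iff (h : BlackRowsOf M G) {c : C} {s₀ : S} (hc : G.black c s₀) (s : S) :
    G.black c s ↔ M c s :=
  ((h c).resolve_right fun hempty => hempty s₀ hc) s

theorem pruneStep (h : BlackRowsOf M G) : BlackRowsOf M G.pruneStep := by
  intro c
  by_cases hu : G.redUniversal c
  · exact Or.inr fun s hs => hs.2 hu
  · rcases h c with hrow | hempty
    · exact Or.inl fun s => (and_iff_left hu).trans (hrow s)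
    · exact Or.inr fun s hs => hempty s hs.1

theorem prune [Fintype C] (h : BlackRowsOf M G) : BlackRowsOf M G.prune := by
  unfold RBGraph.prune
  induction Fintype.card C generalizing G with
  | zero => exact h
  | succ n ih =>
    rw [Function.iterate_succ_apply]
    exact ih h.pruneStep

theorem realize [Fintype C] (h : BlackRowsOf M G) (c : C) : BlackRowsOf M (G.realize c) := by
  apply BlackRowsOf.prune
  intro c'
  by_cases hc : c' = c
  · exact Or.inr fun s hs => hs.2 hc
  · rcases h c' with hrow | hempty
    · exact Or.inl fun s => (and_iff_left hc).trans (hrow s)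
    · exact Or.inr fun s hs => hempty s hs.1

theorem realizeSeq [Fintype C] (h : BlackRowsOf M G) (l : List C) :
    BlackRowsOf M (G.realizeSeq l) := by
  induction l generalizing G with
  | nil => exact h
  | cons c l ih => exact ih (h.realize c)

end BlackRowsOf

theorem blackRowsOf_partialRed [Fintype C] (M : C → S → Prop) (l : List C) (k : ℕ) :
    BlackRowsOf M (partialRed M l k) :=
  BlackRowsOf.realizeSeq (fun _ => Or.inl fun _ => Iff.rfl) _

end RBGraph

theorem CU_nonneighbor_in_CI_neighborhood_general {S C : Type} [Fintype C] (M : C → S → Prop)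
    (hmax : RBGraph.MaximalM M)
    (l : List C) (k : ℕ)
    (Gk : RBGraph S C) (hGk : Gk = RBGraph.partialRed M l k) :
    ∀ cU ∈ Gk.CU, ∀ cI ∈ Gk.CI, ∃ s, Gk.black cI s ∧ ¬ Gk.black cU s := by
  rintro cU ⟨-, ⟨sB, -, hUB⟩, hUuniv⟩ cI ⟨-, ⟨sI, -, hIB⟩, ⟨s₀, hs₀, hIs₀⟩⟩
  have hrows : Gk.BlackRowsOf M := hGk ▸ RBGraph.blackRowsOf_partialRed M l k
  have hne : cI ≠ cU := by
    rintro rfl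
    exact hIs₀ (hUuniv s₀ hs₀)
  obtain ⟨s, hIs, hUs⟩ : ∃ s, M cI s ∧ ¬ M cU s := by
    simpa only [not_forall, exists_prop] using hmax cI cU hne
  exact ⟨s, (hrows.black_iff hIB s).2 hIs, fun h => hUs ((hrows.black_iff hUB s).1 h)⟩

/-- every character of `C_U` has a non-neighbor among the neighbors
of each character of `C_I`. -/
theorem CU_nonneighbor_in_CI_neighborhood {S C : Type} [Fintype C] (M : C → S → Prop)
    (hmax : RBGraph.MaximalM M) (hconn : (RBGraph.ofMatrix M).toSimple.Connected)
    (l : List C) (hl : RBGraph.isReduction M l) (k : ℕ) (hk : k ≤ l.length)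
    (Gk : RBGraph S C) (hGk : Gk = RBGraph.partialRed M l k) :
    ∀ cU ∈ Gk.CU, ∀ cI ∈ Gk.CI, ∃ s, Gk.black cI s ∧ ¬ Gk.black cU s :=
  CU_nonneighbor_in_CI_neighborhood_general M hmax l k Gk hGk
end
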